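/- Let K be a field, let m, n be integers with 0 ≤ m ≤ n, let q, t, z ∈ K with q ≠ 0 and t ≠ 0, and let λ_1 ≥ λ_2 ≥ … ≥ λ_m ≥ 0 be integers. Assume that the elements q^{λ_i}·t^{m−i} (1 ≤ i ≤ m) are pairwise distinct and that z·q^{λ_i}·t^{m−n+j−i−1} ≠ 1 for all 1 ≤ i ≤ m, 1 ≤ j ≤ n. Set x_i = (z·q^{λ_i}·t^{m−i})^{−1} for 1 ≤ i ≤ m and y_j = t^{n−j} for 1 ≤ j ≤ n (in particular z ≠ 0 and z·q^{λ_i}·t^{m−i} ≠ 0). Then F(t^{n−m+1}; x, y; t) = q^{λ_1 + ⋯ + λ_m} · z^m · ∏_{i=1}^{m} (1 − t^{m−n−i})/(1 − z·q^{λ_i}·t^{m−n−i}). -/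

import Mathlib

open Finset Polynomial

set_option linter.unusedSectionVars false
set_option maxHeartbeats 800000

namespace BisymAux

variable {K : Type*} [Field K] {ι : Type*} [DecidableEq ι]

noncomputable def cKt (t u a : K) (w : ι → K) (S I : Finset ι) : K :=
  (-u) ^ I.card * t ^ (I.card.choose 2) *
    (∏ i ∈ I, ∏ j ∈ S \ I, (t * w j - w i) / (w j - w i)) *
    ((∏ i ∈ I, (w i - 1)) * ∏ j ∈ S \ I, (w j - a))

noncomputable def Pout (t u a : K) (w : ι → K) (S I : Finset ι) : K[X] :=
  C (cKt t u a w S I) *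
    ((X - C a) * ((∏ i ∈ I, (C t * X - C (w i))) * ∏ j ∈ S \ I, (X - C (w j))))

noncomputable def Pin (t u a : K) (w : ι → K) (S I : Finset ι) : K[X] :=
  C (cKt t u a w S I * (-u) * t ^ I.card) *
    ((X - C 1) * ((∏ i ∈ I, (X - C (w i))) * ∏ j ∈ S \ I, (X - C (t * w j))))

lemma coeff_top_prod_linear (A : Finset ι) (p : ι → K[X]) (hp : ∀ i ∈ A, (p i).natDegree ≤ 1) :
    (∏ i ∈ A, p i).coeff A.card = ∏ i ∈ A, (p i).coeff 1 := by
  induction A using Finset.induction_on with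
  | empty => simp
  | @insert a s ha ih =>
    rw [prod_insert ha, prod_insert ha, card_insert_of_notMem ha]
    have hs : (∏ i ∈ s, p i).natDegree ≤ s.card := by
      refine (natDegree_prod_le _ _).trans ?_
      calc ∑ i ∈ s, (p i).natDegree ≤ ∑ _i ∈ s, 1 :=
            Finset.sum_le_sum fun i hi => hp i (mem_insert_of_mem hi)
        _ = s.card := by simp
    have h2 := coeff_mul_add_eq_of_natDegree_le (hp a (mem_insert_self a s)) hs
    rw [add_comm] at h2
    rw [h2, ih fun i hi => hp i (mem_insert_of_mem hi)]

lemma natDegree_prod_lin_le (A : Finset ι) (p : ι → K[X]) (hp : ∀ i ∈ A, (p i).natDegree ≤ 1) :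
    (∏ i ∈ A, p i).natDegree ≤ A.card := by
  refine (natDegree_prod_le _ _).trans ?_
  calc ∑ i ∈ A, (p i).natDegree ≤ ∑ _i ∈ A, 1 := Finset.sum_le_sum hp
    _ = A.card := by simp

lemma deg_tX_sub (t c : K) : (C t * X - C c).natDegree ≤ 1 := by
  rw [sub_eq_add_neg, ← C_neg]
  exact natDegree_linear_le

lemma coeff_one_tX_sub (t c : K) : (C t * X - C c).coeff 1 = t := by
  simp [coeff_sub]

lemma deg_X_sub (c : K) : ((X : K[X]) - C c).natDegree ≤ 1 :=
  natDegree_X_sub_C_le c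

lemma coeff_one_X_sub (c : K) : ((X : K[X]) - C c).coeff 1 = 1 := by
  simp [coeff_sub]

lemma card_split {S I : Finset ι} (hI : I ⊆ S) : I.card + (S \ I).card = S.card := by
  rw [card_sdiff_of_subset hI]
  have := card_le_card hI
  omega

lemma Pout_deg {t u a : K} {w : ι → K} {S I : Finset ι} (hI : I ⊆ S) :
    (Pout t u a w S I).natDegree ≤ S.card + 1 := by
  refine natDegree_mul_le.trans ?_
  rw [natDegree_C, zero_add]
  refine natDegree_mul_le.trans ?_
  have h1 : ((X : K[X]) - C a).natDegree ≤ 1 := deg_X_sub a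
  have h2 : ((∏ i ∈ I, (C t * X - C (w i))) * ∏ j ∈ S \ I, (X - C (w j))).natDegree ≤ S.card := by
    refine natDegree_mul_le.trans ?_
    have hA : (∏ i ∈ I, (C t * X - C (w i))).natDegree ≤ I.card :=
      natDegree_prod_lin_le I _ (fun i _ => deg_tX_sub t (w i))
    have hB : (∏ j ∈ S \ I, ((X : K[X]) - C (w j))).natDegree ≤ (S \ I).card :=
      natDegree_prod_lin_le (S \ I) _ (fun j _ => deg_X_sub (w j))
    have := card_split hI
    omega
  omega

lemma Pout_coeff {t u a : K} {w : ι → K} {S I : Finset ι} (hI : I ⊆ S) :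
    (Pout t u a w S I).coeff (S.card + 1) = cKt t u a w S I * t ^ I.card := by
  rw [Pout, coeff_C_mul]
  have h1 : ((X : K[X]) - C a).natDegree ≤ 1 := deg_X_sub a
  have hP1 : (∏ i ∈ I, (C t * X - C (w i))).natDegree ≤ I.card :=
    natDegree_prod_lin_le I _ (fun i _ => deg_tX_sub t (w i))
  have hP2 : (∏ j ∈ S \ I, ((X : K[X]) - C (w j))).natDegree ≤ (S \ I).card :=
    natDegree_prod_lin_le (S \ I) _ (fun j _ => deg_X_sub (w j))
  have h2 : ((∏ i ∈ I, (C t * X - C (w i))) * ∏ j ∈ S \ I, (X - C (w j))).natDegree ≤ S.card :=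
    natDegree_mul_le.trans (by have := card_split hI; omega)
  have e1 : S.card + 1 = 1 + S.card := by omega
  rw [e1, coeff_mul_add_eq_of_natDegree_le h1 h2, coeff_one_X_sub]
  have e2 : S.card = I.card + (S \ I).card := (card_split hI).symm
  rw [e2, coeff_mul_add_eq_of_natDegree_le hP1 hP2,
    coeff_top_prod_linear I _ (fun i _ => deg_tX_sub t (w i)),
    coeff_top_prod_linear (S \ I) _ (fun j _ => deg_X_sub (w j))]
  simp [coeff_one_tX_sub, coeff_one_X_sub]

lemma Pin_deg {t u a : K} {w : ι → K} {S I : Finset ι} (hI : I ⊆ S) :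
    (Pin t u a w S I).natDegree ≤ S.card + 1 := by
  refine natDegree_mul_le.trans ?_
  rw [natDegree_C, zero_add]
  refine natDegree_mul_le.trans ?_
  have h1 : ((X : K[X]) - C 1).natDegree ≤ 1 := deg_X_sub 1
  have h2 : ((∏ i ∈ I, ((X : K[X]) - C (w i))) * ∏ j ∈ S \ I, (X - C (t * w j))).natDegree
      ≤ S.card := by
    refine natDegree_mul_le.trans ?_
    have hA : (∏ i ∈ I, ((X : K[X]) - C (w i))).natDegree ≤ I.card :=
      natDegree_prod_lin_le I _ (fun i _ => deg_X_sub (w i))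
    have hB : (∏ j ∈ S \ I, ((X : K[X]) - C (t * w j))).natDegree ≤ (S \ I).card :=
      natDegree_prod_lin_le (S \ I) _ (fun j _ => deg_X_sub (t * w j))
    have := card_split hI
    omega
  omega

lemma Pin_coeff {t u a : K} {w : ι → K} {S I : Finset ι} (hI : I ⊆ S) :
    (Pin t u a w S I).coeff (S.card + 1) = cKt t u a w S I * (-u) * t ^ I.card := by
  rw [Pin, coeff_C_mul]
  have h1 : ((X : K[X]) - C 1).natDegree ≤ 1 := deg_X_sub 1
  have hP1 : (∏ i ∈ I, ((X : K[X]) - C (w i))).natDegree ≤ I.card :=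
    natDegree_prod_lin_le I _ (fun i _ => deg_X_sub (w i))
  have hP2 : (∏ j ∈ S \ I, ((X : K[X]) - C (t * w j))).natDegree ≤ (S \ I).card :=
    natDegree_prod_lin_le (S \ I) _ (fun j _ => deg_X_sub (t * w j))
  have h2 : ((∏ i ∈ I, ((X : K[X]) - C (w i))) * ∏ j ∈ S \ I, (X - C (t * w j))).natDegree
      ≤ S.card := natDegree_mul_le.trans (by have := card_split hI; omega)
  have e1 : S.card + 1 = 1 + S.card := by omega
  rw [e1, coeff_mul_add_eq_of_natDegree_le h1 h2, coeff_one_X_sub]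
  have e2 : S.card = I.card + (S \ I).card := (card_split hI).symm
  rw [e2, coeff_mul_add_eq_of_natDegree_le hP1 hP2,
    coeff_top_prod_linear I _ (fun i _ => deg_X_sub (w i)),
    coeff_top_prod_linear (S \ I) _ (fun j _ => deg_X_sub (t * w j))]
  simp [coeff_one_X_sub]


lemma eval_Pout (t u a : K) (w : ι → K) (S I : Finset ι) (c : K) :
    (Pout t u a w S I).eval c =
      cKt t u a w S I * ((c - a) * ((∏ i ∈ I, (t * c - w i)) * ∏ j ∈ S \ I, (c - w j))) := by
  simp [Pout, eval_prod]

lemma eval_Pin (t u a : K) (w : ι → K) (S I : Finset ι) (c : K) :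
    (Pin t u a w S I).eval c =
      cKt t u a w S I * (-u) * t ^ I.card *
        ((c - 1) * ((∏ i ∈ I, (c - w i)) * ∏ j ∈ S \ I, (c - t * w j))) := by
  simp [Pin, eval_prod]

lemma insert_sdiff_aux {S I : Finset ι} {ℓ : ι} (hℓ : ℓ ∉ S) (hI : I ⊆ S) :
    insert ℓ S \ I = insert ℓ (S \ I) := by
  apply Finset.insert_sdiff_of_notMem
  exact fun h => hℓ (hI h)

lemma insert_sdiff_aux2 {S I : Finset ι} {ℓ : ι} (hℓ : ℓ ∉ S) :
    insert ℓ S \ insert ℓ I = S \ I := by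
  ext x
  simp only [mem_sdiff, mem_insert]
  constructor
  · rintro ⟨hx1 | hx1, hx2⟩
    · exact absurd (Or.inl hx1) hx2
    · exact ⟨hx1, fun h => hx2 (Or.inr h)⟩
  · rintro ⟨hx1, hx2⟩
    refine ⟨Or.inr hx1, ?_⟩
    rintro (rfl | h)
    exacts [hℓ hx1, hx2 h]

lemma choose_succ_two (k : ℕ) : (k + 1).choose 2 = k.choose 2 + k := by
  rw [Nat.choose_succ_succ, Nat.choose_one_right, add_comm]

lemma cancel1 (t : K) (w : ι → K) (A : Finset ι) (c : K) (h : ∀ j ∈ A, w j ≠ c) :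
    (∏ j ∈ A, (t * w j - c) / (w j - c)) * ∏ j ∈ A, (c - w j) =
      ∏ j ∈ A, (c - t * w j) := by
  rw [← prod_mul_distrib]
  refine prod_congr rfl fun j hj => ?_
  have hy : w j - c ≠ 0 := sub_ne_zero.2 (h j hj)
  field_simp
  ring

lemma cancel2 (t : K) (w : ι → K) (A : Finset ι) (c : K) (h : ∀ i ∈ A, w i ≠ c) :
    (∏ i ∈ A, (t * c - w i) / (c - w i)) * ∏ i ∈ A, (c - w i) =
      ∏ i ∈ A, (t * c - w i) := by
  rw [← prod_mul_distrib]
  refine prod_congr rfl fun i hi => ?_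
  exact div_mul_cancel₀ _ (sub_ne_zero.2 (Ne.symm (h i hi)))

/-- Evaluation of the out-term at `w ℓ` recovers the `I`-term of the sum over `insert ℓ S`. -/
lemma evalOut (t u a : K) (w : ι → K) (S I : Finset ι) (ℓ : ι) (hI : I ⊆ S) (hℓ : ℓ ∉ S)
    (hne : ∀ j ∈ S, w ℓ ≠ w j) :
    (Pout t u a w S I).eval (w ℓ) =
      cKt t u a w (insert ℓ S) I * ∏ j ∈ S, (w ℓ - w j) := by
  have hℓI : ℓ ∉ I := fun h => hℓ (hI h)
  rw [eval_Pout, cKt, cKt, insert_sdiff_aux hℓ hI, prod_insert (fun h => hℓ ((mem_sdiff.1 h).1))]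
  have hsplit : ∏ j ∈ S, (w ℓ - w j) =
      (∏ j ∈ S \ I, (w ℓ - w j)) * ∏ i ∈ I, (w ℓ - w i) := (prod_sdiff hI).symm
  have hcross : ∏ i ∈ I, ∏ j ∈ insert ℓ (S \ I), (t * w j - w i) / (w j - w i) =
      (∏ i ∈ I, (t * w ℓ - w i) / (w ℓ - w i)) *
        ∏ i ∈ I, ∏ j ∈ S \ I, (t * w j - w i) / (w j - w i) := by
    rw [← prod_mul_distrib]
    refine prod_congr rfl fun i hi => ?_
    rw [prod_insert (fun h => hℓ ((mem_sdiff.1 h).1))]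
  rw [hcross, hsplit]
  have hc2 : (∏ i ∈ I, (t * w ℓ - w i) / (w ℓ - w i)) * ∏ i ∈ I, (w ℓ - w i) =
      ∏ i ∈ I, (t * w ℓ - w i) :=
    cancel2 t w I (w ℓ) (fun i hi => (hne i (hI hi)).symm)
  rw [← hc2]
  ring

/-- Evaluation of the in-term at `w ℓ` recovers the `insert ℓ I`-term. -/
lemma evalIn (t u a : K) (w : ι → K) (S I : Finset ι) (ℓ : ι) (hI : I ⊆ S) (hℓ : ℓ ∉ S)
    (hne : ∀ j ∈ S, w ℓ ≠ w j) :
    (Pin t u a w S I).eval (w ℓ) =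
      cKt t u a w (insert ℓ S) (insert ℓ I) * ∏ j ∈ S, (w ℓ - w j) := by
  have hℓI : ℓ ∉ I := fun h => hℓ (hI h)
  rw [eval_Pin]
  simp only [cKt]
  rw [insert_sdiff_aux2 hℓ, card_insert_of_notMem hℓI, prod_insert hℓI, prod_insert hℓI,
    choose_succ_two]
  have hsplit : ∏ j ∈ S, (w ℓ - w j) =
      (∏ j ∈ S \ I, (w ℓ - w j)) * ∏ i ∈ I, (w ℓ - w i) := (prod_sdiff hI).symm
  rw [hsplit]
  have hc1 : (∏ j ∈ S \ I, (t * w j - w ℓ) / (w j - w ℓ)) * ∏ j ∈ S \ I, (w ℓ - w j) =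
      ∏ j ∈ S \ I, (w ℓ - t * w j) :=
    cancel1 t w (S \ I) (w ℓ) (fun j hj => (hne j (mem_sdiff.1 hj).1).symm)
  rw [← hc1]
  rw [pow_add, pow_add]
  ring


lemma eval0 (t u a : K) (w : ι → K) (S I : Finset ι) (hI : I ⊆ S) (ha : a = u * t ^ S.card) :
    (Pout t u a w S I).eval 0 + (Pin t u a w S I).eval 0 = 0 := by
  rw [eval_Pout, eval_Pin]
  have h2 : ∏ i ∈ I, (t * (0:K) - w i) = ∏ i ∈ I, ((0:K) - w i) :=
    prod_congr rfl fun i _ => by ring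
  have h1 : ∏ j ∈ S \ I, ((0:K) - t * w j) = t ^ (S \ I).card * ∏ j ∈ S \ I, ((0:K) - w j) := by
    rw [← prod_const, ← prod_mul_distrib]
    exact prod_congr rfl fun j _ => by ring
  have h3 : t ^ I.card * t ^ (S \ I).card = t ^ S.card := by
    rw [← pow_add, card_split hI]
  rw [h1, h2, ha]
  linear_combination (cKt t u (u * t ^ S.card) w S I * (∏ i ∈ I, ((0:K) - w i)) *
    (∏ j ∈ S \ I, ((0:K) - w j)) * u) * h3

lemma residue (t u a : K) (w : ι → K) (S J : Finset ι) (r : ι) (hr : r ∈ S) (hJ : J ⊆ S)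
    (hrJ : r ∉ J) (hinj : ∀ i ∈ S, ∀ j ∈ S, w i = w j → i = j) :
    (Pout t u a w S (insert r J)).eval (w r) + (Pin t u a w S J).eval (w r) = 0 := by
  set D := S \ insert r J with hD
  have hrD : r ∉ D := by simp [hD]
  have hDmem : ∀ j ∈ D, j ∈ S ∧ j ≠ r ∧ j ∉ J := by
    intro j hj
    rw [hD, mem_sdiff, mem_insert] at hj
    exact ⟨hj.1, fun h => hj.2 (Or.inl h), fun h => hj.2 (Or.inr h)⟩
  have hSJ : S \ J = insert r D := by
    ext x
    simp only [hD, mem_sdiff, mem_insert]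
    constructor
    · rintro ⟨hx1, hx2⟩
      by_cases hxr : x = r
      · exact Or.inl hxr
      · exact Or.inr ⟨hx1, by tauto⟩
    · rintro (rfl | ⟨hx1, hx2⟩)
      · exact ⟨hr, hrJ⟩
      · exact ⟨hx1, fun h => hx2 (Or.inr h)⟩
  have hDr : ∀ j ∈ D, w j ≠ w r := fun j hj h =>
    (hDmem j hj).2.1 (hinj j (hDmem j hj).1 r hr h)
  have hJr : ∀ i ∈ J, w i ≠ w r := fun i hi h =>
    hrJ (hinj i (hJ hi) r hr h ▸ hi)
  set E : K := (-u) ^ (J.card + 1) * t ^ (J.card.choose 2 + J.card) *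
      (∏ i ∈ J, ∏ j ∈ D, (t * w j - w i) / (w j - w i)) *
      ((w r - 1) * ∏ i ∈ J, (w i - 1)) * (∏ j ∈ D, (w j - a)) *
      ((w r - a) * ((∏ i ∈ J, (t * w r - w i)) * ∏ j ∈ D, (w r - t * w j))) with hE
  have hc1 : (∏ j ∈ D, (t * w j - w r) / (w j - w r)) * ∏ j ∈ D, (w r - w j) =
      ∏ j ∈ D, (w r - t * w j) := cancel1 t w D (w r) hDr
  have hc2 : (∏ i ∈ J, (t * w r - w i) / (w r - w i)) * ∏ i ∈ J, (w r - w i) =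
      ∏ i ∈ J, (t * w r - w i) := cancel2 t w J (w r) hJr
  have hA : (Pout t u a w S (insert r J)).eval (w r) = E * (t * w r - w r) := by
    rw [eval_Pout]
    simp only [cKt]
    rw [← hD, card_insert_of_notMem hrJ, choose_succ_two, prod_insert hrJ, prod_insert hrJ,
      prod_insert hrJ, hE, ← hc1]
    rw [pow_add]
    ring
  have hB : (Pin t u a w S J).eval (w r) = E * (w r - t * w r) := by
    rw [eval_Pin]
    simp only [cKt]
    rw [hSJ]
    simp only [prod_insert hrD]
    rw [prod_mul_distrib, hE, ← hc2]
    rw [pow_add]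
    ring
  rw [hA, hB]
  ring

lemma cKt_mul_t (t u a : K) (w : ι → K) (S I : Finset ι) :
    cKt t u a w S I * t ^ I.card = cKt t (u * t) a w S I := by
  simp only [cKt]
  rw [show -(u * t) = -u * t by ring, mul_pow]
  ring

theorem keyT (t : K) (ht : t ≠ 0) (w : ι → K) :
    ∀ S : Finset ι, (∀ i ∈ S, ∀ j ∈ S, w i = w j → i = j) → (∀ i ∈ S, w i ≠ 0) →
      ∀ u a : K, a * t = u * t ^ S.card →
      ∑ I ∈ S.powerset, cKt t u a w S I =
        (∏ k ∈ Finset.range S.card, (1 - u * t ^ k)) * ∏ i ∈ S, w i := by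
  classical
  intro S
  induction S using Finset.induction_on with
  | empty =>
    intro _ _ u a _
    simp [cKt]
  | @insert ℓ S₀ hℓ ih =>
    intro hinj hw0 u a hrel
    have hcard : (insert ℓ S₀).card = S₀.card + 1 := card_insert_of_notMem hℓ
    set s := S₀.card with hs
    have ha : a = u * t ^ s := by
      have h1 : a * t = u * t ^ s * t := by rw [hrel, hcard, pow_succ]; ring
      exact mul_right_cancel₀ ht h1
    have hℓS : ∀ j ∈ S₀, w ℓ ≠ w j := by
      intro j hj h
      exact hℓ ((hinj ℓ (mem_insert_self ℓ S₀) j (mem_insert_of_mem hj) h) ▸ hj)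
    have hinj₀ : ∀ i ∈ S₀, ∀ j ∈ S₀, w i = w j → i = j :=
      fun i hi j hj => hinj i (mem_insert_of_mem hi) j (mem_insert_of_mem hj)
    have hw0₀ : ∀ i ∈ S₀, w i ≠ 0 := fun i hi => hw0 i (mem_insert_of_mem hi)
    have hIH := ih hinj₀ hw0₀ (u * t) a (by rw [ha]; ring)
    set NL : K[X] := ∑ I ∈ S₀.powerset, (Pout t u a w S₀ I + Pin t u a w S₀ I) with hNL
    set NR : K[X] := C ((∏ k ∈ Finset.range (s + 1), (1 - u * t ^ k)) * ∏ i ∈ S₀, w i) *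
      (X * ∏ j ∈ S₀, (X - C (w j))) with hNR
    have hdegNL : NL.natDegree ≤ s + 1 := by
      rw [hNL]
      refine natDegree_sum_le_of_forall_le _ _ fun I hI => ?_
      have hIs := mem_powerset.1 hI
      exact (natDegree_add_le _ _).trans (max_le (Pout_deg hIs) (Pin_deg hIs))
    have hdegNR : NR.natDegree ≤ s + 1 := by
      rw [hNR]
      refine natDegree_mul_le.trans ?_
      rw [natDegree_C, zero_add]
      refine natDegree_mul_le.trans ?_
      have h1 : (∏ j ∈ S₀, ((X : K[X]) - C (w j))).natDegree ≤ s :=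
        natDegree_prod_lin_le S₀ _ (fun j _ => deg_X_sub (w j))
      have h2 : (X : K[X]).natDegree = 1 := natDegree_X
      omega
    have hcoeff : NL.coeff (s + 1) = NR.coeff (s + 1) := by
      rw [hNL, hNR, finset_sum_coeff]
      have hL : ∀ I ∈ S₀.powerset, (Pout t u a w S₀ I + Pin t u a w S₀ I).coeff (s + 1) =
          (1 - u) * cKt t (u * t) a w S₀ I := by
        intro I hI
        have hIs := mem_powerset.1 hI
        rw [coeff_add, Pout_coeff hIs, Pin_coeff hIs, ← cKt_mul_t]
        ring
      rw [sum_congr rfl hL, ← mul_sum, hIH]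
      have hR : (C ((∏ k ∈ Finset.range (s + 1), (1 - u * t ^ k)) * ∏ i ∈ S₀, w i) *
          (X * ∏ j ∈ S₀, (X - C (w j)))).coeff (s + 1) =
          (∏ k ∈ Finset.range (s + 1), (1 - u * t ^ k)) * ∏ i ∈ S₀, w i := by
        rw [coeff_C_mul, coeff_X_mul,
          coeff_top_prod_linear S₀ _ (fun j _ => deg_X_sub (w j))]
        simp [coeff_one_X_sub]
      rw [hR, prod_range_succ' (fun k => 1 - u * t ^ k) s]
      have hcg : ∀ k ∈ Finset.range s, (1 : K) - u * t * t ^ k = 1 - u * t ^ (k + 1) :=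
        fun k _ => by rw [pow_succ]; ring
      rw [prod_congr rfl hcg]
      simp
      ring
    have himg : (0 : K) ∉ S₀.image w := by
      intro h
      obtain ⟨i, hi, h0⟩ := mem_image.1 h
      exact hw0₀ i hi h0
    have hcardR : (insert (0 : K) (S₀.image w)).card = s + 1 := by
      rw [card_insert_of_notMem himg, card_image_of_injOn]
      intro i hi j hj h
      exact hinj₀ i hi j hj h
    have hroots : ∀ c ∈ insert (0 : K) (S₀.image w), (NL - NR).eval c = 0 := by
      intro c hc
      rw [eval_sub, sub_eq_zero]
      rcases mem_insert.1 hc with rfl | hcw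
      · have hL0 : NL.eval 0 = 0 := by
          rw [hNL, eval_finset_sum]
          refine Finset.sum_eq_zero fun I hI => ?_
          rw [eval_add]
          exact eval0 t u a w S₀ I (mem_powerset.1 hI) ha
        rw [hL0, hNR]
        simp
      · obtain ⟨r, hrS, rfl⟩ := mem_image.1 hcw
        have hR0 : NR.eval (w r) = 0 := by
          have h0 : ∏ j ∈ S₀, (w r - w j) = 0 := prod_eq_zero hrS (sub_self _)
          rw [hNR]
          simp [eval_prod, h0]
        rw [hR0, hNL, eval_finset_sum]
        have hS₀ : S₀.powerset = (insert r (S₀.erase r)).powerset := by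
          rw [insert_erase hrS]
        rw [hS₀, sum_powerset_insert (notMem_erase r S₀)]
        have hterm : ∀ J ∈ (S₀.erase r).powerset,
            ((Pout t u a w S₀ J + Pin t u a w S₀ J).eval (w r) +
              (Pout t u a w S₀ (insert r J) + Pin t u a w S₀ (insert r J)).eval (w r)) = 0 := by
          intro J hJp
          have hJe := mem_powerset.1 hJp
          have hJ : J ⊆ S₀ := hJe.trans (erase_subset r S₀)
          have hrJ : r ∉ J := fun h => notMem_erase r S₀ (hJe h)
          have e1 : (Pout t u a w S₀ J).eval (w r) = 0 := by
            have h0 : ∏ j ∈ S₀ \ J, (w r - w j) = 0 :=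
              prod_eq_zero (mem_sdiff.2 ⟨hrS, hrJ⟩) (sub_self _)
            rw [eval_Pout, h0]
            ring
          have e2 : (Pin t u a w S₀ (insert r J)).eval (w r) = 0 := by
            have h0 : ∏ i ∈ insert r J, (w r - w i) = 0 :=
              prod_eq_zero (mem_insert_self r J) (sub_self _)
            rw [eval_Pin, h0]
            ring
          have e3 := residue t u a w S₀ J r hrS hJ hrJ hinj₀
          rw [eval_add, eval_add, e1, e2]
          rw [zero_add, add_zero]
          linear_combination e3
        rw [← sum_add_distrib, Finset.sum_eq_zero hterm]
    have hsub : NL - NR = 0 := by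
      refine eq_zero_of_natDegree_lt_card_of_eval_eq_zero' _ _ hroots ?_
      rw [hcardR]
      have hd : (NL - NR).natDegree ≤ s := by
        rw [natDegree_le_iff_coeff_eq_zero]
        intro N hN
        rw [coeff_sub]
        by_cases hN1 : N = s + 1
        · rw [hN1, hcoeff, sub_self]
        · have hlt : s + 1 < N := by omega
          rw [coeff_eq_zero_of_natDegree_lt (lt_of_le_of_lt hdegNL hlt),
            coeff_eq_zero_of_natDegree_lt (lt_of_le_of_lt hdegNR hlt), sub_self]
      omega
    have hpoly : NL = NR := sub_eq_zero.1 hsub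
    have hPne : (∏ j ∈ S₀, (w ℓ - w j)) ≠ 0 :=
      prod_ne_zero_iff.2 fun j hj => sub_ne_zero.2 (hℓS j hj)
    rw [hcard, sum_powerset_insert hℓ]
    apply mul_right_cancel₀ hPne
    have h1 : (∑ I ∈ S₀.powerset, cKt t u a w (insert ℓ S₀) I) * (∏ j ∈ S₀, (w ℓ - w j)) =
        ∑ I ∈ S₀.powerset, (Pout t u a w S₀ I).eval (w ℓ) := by
      rw [sum_mul]
      exact sum_congr rfl fun I hI =>
        (evalOut t u a w S₀ I ℓ (mem_powerset.1 hI) hℓ hℓS).symm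
    have h2 : (∑ I ∈ S₀.powerset, cKt t u a w (insert ℓ S₀) (insert ℓ I)) *
        (∏ j ∈ S₀, (w ℓ - w j)) = ∑ I ∈ S₀.powerset, (Pin t u a w S₀ I).eval (w ℓ) := by
      rw [sum_mul]
      exact sum_congr rfl fun I hI =>
        (evalIn t u a w S₀ I ℓ (mem_powerset.1 hI) hℓ hℓS).symm
    calc (∑ I ∈ S₀.powerset, cKt t u a w (insert ℓ S₀) I +
            ∑ I ∈ S₀.powerset, cKt t u a w (insert ℓ S₀) (insert ℓ I)) *
          (∏ j ∈ S₀, (w ℓ - w j))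
        = NL.eval (w ℓ) := by
          rw [add_mul, h1, h2, hNL, eval_finset_sum]
          rw [← sum_add_distrib]
          exact sum_congr rfl fun I _ => by rw [eval_add]
      _ = NR.eval (w ℓ) := by rw [hpoly]
      _ = ((∏ k ∈ Finset.range (s + 1), (1 - u * t ^ k)) * ∏ i ∈ insert ℓ S₀, w i) *
            ∏ j ∈ S₀, (w ℓ - w j) := by
          rw [hNR, prod_insert hℓ]
          simp [eval_prod]
          ring

lemma div_div_same (a b c : K) (hc : c ≠ 0) : (a / c) / (b / c) = a / b := by
  rcases eq_or_ne b 0 with rfl | hb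
  · simp
  · field_simp

lemma telescope (t x : K) : ∀ n : ℕ, 1 ≤ n → (∀ k, 1 ≤ k → k ≤ n → 1 - x * t ^ k ≠ 0) →
    ∏ k ∈ Finset.range n, ((1 - x * t ^ k) / (1 - x * t ^ (k + 1))) =
      (1 - x) / (1 - x * t ^ n) := by
  intro n
  induction n with
  | zero => omega
  | succ n ih =>
    intro _ h
    by_cases hn : n = 0
    · subst hn
      simp
    · have hn1 : 1 ≤ n := by omega
      rw [Finset.prod_range_succ, ih hn1 (fun k hk1 hk2 => h k hk1 (by omega))]
      exact div_mul_div_cancel₀ (h n hn1 (by omega))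

end BisymAux

open BisymAux

/-- The bisymmetric function `F(u; x, y; t)` of Kirillov--Noumi. -/
noncomputable def bisymF {K : Type*} [Field K] {m n : ℕ} (u t : K)
    (x : Fin m → K) (y : Fin n → K) : K :=
  ∑ I : Finset (Fin m),
    (-u) ^ I.card * t ^ (I.card.choose 2) *
      (∏ i ∈ I, ∏ j ∈ Iᶜ, (t * x i - x j) / (x i - x j)) *
      (∏ i ∈ I, ∏ j, (1 - x i * y j) / (1 - t * x i * y j))

/-- The principal specialization formula
`V_{λ,0}(t^{n-m+1}, z; q, t) = q^{|λ|} z^m ∏_{i=1}^m (1-t^{m-n-i})/(1-z q^{λ_i} t^{m-n-i})`. -/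
theorem bisymF_V_specialization {K : Type*} [Field K] {m n : ℕ} (hmn : m ≤ n)
    (q t z : K) (hq : q ≠ 0) (ht : t ≠ 0) (hz : z ≠ 0)
    (lam : Fin m → ℕ) (hlam : Antitone lam)
    (hinj : Function.Injective (fun i : Fin m => q ^ lam i * t ^ (m - 1 - i.val)))
    (hne : ∀ (i : Fin m) (j : Fin n),
      z * q ^ lam i * t ^ ((m : ℤ) - (n : ℤ) + (j.val : ℤ) - (i.val : ℤ) - 1) ≠ 1) :
    bisymF (t ^ (n - m + 1)) t
        (fun i : Fin m => (z * q ^ lam i * t ^ (m - 1 - i.val))⁻¹)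
        (fun j : Fin n => t ^ (n - 1 - j.val)) =
      q ^ (∑ i, lam i) * z ^ m *
        ∏ i : Fin m,
          (1 - t ^ ((m : ℤ) - (n : ℤ) - ((i.val : ℤ) + 1))) /
          (1 - z * q ^ lam i * t ^ ((m : ℤ) - (n : ℤ) - ((i.val : ℤ) + 1))) := by
  classical
  set w : Fin m → K := fun i => z * q ^ lam i * t ^ (m - 1 - i.val) with hw
  have hw0 : ∀ i, w i ≠ 0 := fun i =>
    mul_ne_zero (mul_ne_zero hz (pow_ne_zero _ hq)) (pow_ne_zero _ ht)
  have hwinj : ∀ i j : Fin m, w i = w j → i = j := by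
    intro i j h
    apply hinj
    have h2 : z * (q ^ lam i * t ^ (m - 1 - i.val)) =
        z * (q ^ lam j * t ^ (m - 1 - j.val)) := by
      rw [← mul_assoc, ← mul_assoc]
      exact h
    exact mul_left_cancel₀ hz h2
  clear_value w
  have hWk : ∀ (i : Fin m) (k : ℕ), 1 ≤ k → k ≤ n → w i ≠ t ^ k := by
    intro i k hk1 hkn heq
    apply hne i ⟨n - k, by omega⟩
    have h1 : i.val < m := i.isLt
    show z * q ^ lam i * t ^ ((m : ℤ) - n + ((n - k : ℕ) : ℤ) - (i.val : ℤ) - 1) = 1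
    have hcast : (m : ℤ) - n + ((n - k : ℕ) : ℤ) - (i.val : ℤ) - 1 =
        ((m - 1 - i.val : ℕ) : ℤ) - (k : ℤ) := by omega
    rw [hcast, zpow_sub₀ ht, zpow_natCast, zpow_natCast]
    have h3 : z * q ^ lam i * (t ^ (m - 1 - i.val) / t ^ k) = w i / t ^ k := by
      simp only [hw]
      ring
    rw [h3, heq, div_self (pow_ne_zero k ht)]
  have hwa : ∀ i : Fin m, w i ≠ t ^ n := fun i => hWk i n (le_trans i.pos hmn) le_rfl
  have hane : ∀ i : Fin m, w i - t ^ n ≠ 0 := fun i => sub_ne_zero.2 (hwa i)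
  have hPne : (∏ i : Fin m, (w i - t ^ n)) ≠ 0 :=
    prod_ne_zero_iff.2 fun i _ => hane i
  have hy : ∀ i : Fin m,
      (∏ j : Fin n, (1 - (w i)⁻¹ * t ^ (n - 1 - j.val)) /
        (1 - t * (w i)⁻¹ * t ^ (n - 1 - j.val))) = (w i - 1) / (w i - t ^ n) := by
    intro i
    have hn1 : 1 ≤ n := le_trans i.pos hmn
    have hnz : ∀ k, 1 ≤ k → k ≤ n → 1 - (w i)⁻¹ * t ^ k ≠ 0 := by
      intro k hk1 hkn h0
      have h2 : (w i)⁻¹ * t ^ k = 1 := by linear_combination -h0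
      have h3 : w i * ((w i)⁻¹ * t ^ k) = w i * 1 := by rw [h2]
      rw [mul_one, ← mul_assoc, mul_inv_cancel₀ (hw0 i), one_mul] at h3
      exact hWk i k hk1 hkn h3.symm
    have hstep : ∀ j : Fin n,
        (1 - (w i)⁻¹ * t ^ (n - 1 - j.val)) / (1 - t * (w i)⁻¹ * t ^ (n - 1 - j.val)) =
          (1 - (w i)⁻¹ * t ^ (n - 1 - j.val)) / (1 - (w i)⁻¹ * t ^ (n - 1 - j.val + 1)) := by
      intro j
      congr 1
      rw [pow_succ]
      ring
    rw [prod_congr rfl (fun j _ => hstep j)]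
    rw [Fin.prod_univ_eq_prod_range (fun k => (1 - (w i)⁻¹ * t ^ (n - 1 - k)) /
      (1 - (w i)⁻¹ * t ^ (n - 1 - k + 1))) n]
    rw [Finset.prod_range_reflect (fun k => (1 - (w i)⁻¹ * t ^ k) /
      (1 - (w i)⁻¹ * t ^ (k + 1))) n]
    rw [telescope t ((w i)⁻¹) n hn1 hnz]
    have e1 : 1 - (w i)⁻¹ = (w i - 1) / (w i) := by
      rw [eq_div_iff (hw0 i), sub_mul, one_mul, inv_mul_cancel₀ (hw0 i)]
    have e2 : 1 - (w i)⁻¹ * t ^ n = (w i - t ^ n) / (w i) := by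
      rw [eq_div_iff (hw0 i), sub_mul, one_mul, mul_comm ((w i)⁻¹) (t ^ n), mul_assoc,
        inv_mul_cancel₀ (hw0 i), mul_one]
    rw [e1, e2, div_div_same _ _ _ (hw0 i)]
  have hcross : ∀ i j : Fin m,
      (t * (w i)⁻¹ - (w j)⁻¹) / ((w i)⁻¹ - (w j)⁻¹) = (t * w j - w i) / (w j - w i) := by
    intro i j
    have hij : w i * w j ≠ 0 := mul_ne_zero (hw0 i) (hw0 j)
    have e1 : t * (w i)⁻¹ - (w j)⁻¹ = (t * w j - w i) / (w i * w j) := by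
      rw [eq_div_iff hij]
      calc (t * (w i)⁻¹ - (w j)⁻¹) * (w i * w j)
          = t * ((w i)⁻¹ * w i) * w j - ((w j)⁻¹ * w j) * w i := by ring
        _ = t * w j - w i := by
            rw [inv_mul_cancel₀ (hw0 i), inv_mul_cancel₀ (hw0 j)]
            ring
    have e2 : (w i)⁻¹ - (w j)⁻¹ = (w j - w i) / (w i * w j) := by
      rw [eq_div_iff hij]
      calc ((w i)⁻¹ - (w j)⁻¹) * (w i * w j)
          = ((w i)⁻¹ * w i) * w j - ((w j)⁻¹ * w j) * w i := by ring
        _ = w j - w i := by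
            rw [inv_mul_cancel₀ (hw0 i), inv_mul_cancel₀ (hw0 j)]
            ring
    rw [e1, e2, div_div_same _ _ _ hij]
  have hkey := keyT t ht w Finset.univ (fun i _ j _ h => hwinj i j h) (fun i _ => hw0 i)
    (t ^ (n - m + 1)) (t ^ n)
    (by
      rw [card_univ, Fintype.card_fin, ← pow_succ, ← pow_add]
      congr 1
      omega)
  rw [Finset.powerset_univ, card_univ, Fintype.card_fin] at hkey
  have hper : ∀ I : Finset (Fin m),
      ((-(t ^ (n - m + 1))) ^ I.card * t ^ (I.card.choose 2) *
        (∏ i ∈ I, ∏ j ∈ Iᶜ, (t * (w i)⁻¹ - (w j)⁻¹) / ((w i)⁻¹ - (w j)⁻¹)) *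
        (∏ i ∈ I, ∏ j : Fin n, (1 - (w i)⁻¹ * t ^ (n - 1 - j.val)) /
          (1 - t * (w i)⁻¹ * t ^ (n - 1 - j.val)))) * (∏ i : Fin m, (w i - t ^ n)) =
      cKt t (t ^ (n - m + 1)) (t ^ n) w Finset.univ I := by
    intro I
    rw [prod_congr rfl (fun i (_ : i ∈ I) =>
      prod_congr rfl (fun j (_ : j ∈ Iᶜ) => hcross i j))]
    rw [prod_congr rfl (fun i (_ : i ∈ I) => hy i)]
    simp only [compl_eq_univ_sdiff]
    rw [cKt, ← prod_sdiff (subset_univ I)]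
    have hcan : (∏ i ∈ I, ((w i - 1) / (w i - t ^ n))) * ∏ i ∈ I, (w i - t ^ n) =
        ∏ i ∈ I, (w i - 1) := by
      rw [← prod_mul_distrib]
      exact prod_congr rfl fun i _ => div_mul_cancel₀ _ (hane i)
    rw [← hcan]
    ring
  have hfrac : ∀ i : Fin m,
      q ^ lam i * z * ((1 - t ^ ((m : ℤ) - (n : ℤ) - ((i.val : ℤ) + 1))) /
        (1 - z * q ^ lam i * t ^ ((m : ℤ) - (n : ℤ) - ((i.val : ℤ) + 1)))) * (w i - t ^ n) =
      (1 - t ^ (n - m + 1) * t ^ (i.val : ℕ)) * w i := by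
    intro i
    have h1 : i.val < m := i.isLt
    have hAi : (t : K) ^ ((m : ℤ) - (n : ℤ) - ((i.val : ℤ) + 1)) =
        t ^ (m - 1 - i.val) / t ^ n := by
      have hc : (m : ℤ) - (n : ℤ) - ((i.val : ℤ) + 1) =
          ((m - 1 - i.val : ℕ) : ℤ) - (n : ℤ) := by omega
      rw [hc, zpow_sub₀ ht, zpow_natCast, zpow_natCast]
    have htn : (t : K) ^ n ≠ 0 := pow_ne_zero n ht
    have e1 : (1 : K) - t ^ (m - 1 - i.val) / t ^ n = (t ^ n - t ^ (m - 1 - i.val)) / t ^ n := by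
      field_simp
    have e2 : (1 : K) - z * q ^ lam i * (t ^ (m - 1 - i.val) / t ^ n) =
        (t ^ n - w i) / t ^ n := by
      rw [eq_div_iff htn]
      calc (1 - z * q ^ lam i * (t ^ (m - 1 - i.val) / t ^ n)) * t ^ n
          = t ^ n - z * q ^ lam i * (t ^ (m - 1 - i.val) / t ^ n * t ^ n) := by ring
        _ = t ^ n - w i := by
            rw [div_mul_cancel₀ _ htn]
            simp only [hw]
    rw [hAi, e1, e2, div_div_same _ _ _ htn]
    have hne' : (t : K) ^ n - w i ≠ 0 := sub_ne_zero.2 (Ne.symm (hwa i))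
    have e3 : (t ^ n - t ^ (m - 1 - i.val)) / (t ^ n - w i) * (w i - t ^ n) =
        -(t ^ n - t ^ (m - 1 - i.val)) := by
      rw [show w i - t ^ n = -(t ^ n - w i) by ring, mul_neg, div_mul_cancel₀ _ hne']
    have e4 : q ^ lam i * z * ((t ^ n - t ^ (m - 1 - i.val)) / (t ^ n - w i)) *
        (w i - t ^ n) = q ^ lam i * z *
        ((t ^ n - t ^ (m - 1 - i.val)) / (t ^ n - w i) * (w i - t ^ n)) := by ring
    rw [e4, e3]
    have e5 : t ^ (n - m + 1) * t ^ (i.val) * t ^ (m - 1 - i.val) = (t : K) ^ n := by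
      rw [← pow_add, ← pow_add]
      congr 1
      omega
    simp only [hw]
    linear_combination (z * q ^ lam i) * e5
  have hxfun : (fun i : Fin m => (z * q ^ lam i * t ^ (m - 1 - i.val))⁻¹) =
      (fun i : Fin m => (w i)⁻¹) := by rw [hw]
  rw [hxfun]
  simp only [bisymF]
  apply mul_right_cancel₀ hPne
  rw [sum_mul, Finset.sum_congr rfl (fun I _ => hper I), hkey]
  have hz1 : (z : K) ^ m = ∏ _i : Fin m, z := by
    rw [prod_const, card_univ, Fintype.card_fin]
  have hq1 : (q : K) ^ (∑ i, lam i) = ∏ i : Fin m, q ^ lam i := by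
    rw [← Finset.prod_pow_eq_pow_sum]
  calc (∏ k ∈ Finset.range m, (1 - t ^ (n - m + 1) * t ^ k)) * ∏ i : Fin m, w i
      = ∏ i : Fin m, ((1 - t ^ (n - m + 1) * t ^ (i.val : ℕ)) * w i) := by
        rw [prod_mul_distrib, Fin.prod_univ_eq_prod_range
          (fun k => 1 - t ^ (n - m + 1) * t ^ k) m]
    _ = ∏ i : Fin m, (q ^ lam i * z * ((1 - t ^ ((m : ℤ) - (n : ℤ) - ((i.val : ℤ) + 1))) /
          (1 - z * q ^ lam i * t ^ ((m : ℤ) - (n : ℤ) - ((i.val : ℤ) + 1)))) *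
          (w i - t ^ n)) := (prod_congr rfl (fun i _ => hfrac i)).symm
    _ = (q ^ (∑ i, lam i) * z ^ m * ∏ i : Fin m,
          (1 - t ^ ((m : ℤ) - (n : ℤ) - ((i.val : ℤ) + 1))) /
          (1 - z * q ^ lam i * t ^ ((m : ℤ) - (n : ℤ) - ((i.val : ℤ) + 1)))) *
        ∏ i : Fin m, (w i - t ^ n) := by
        rw [hq1, hz1, ← prod_mul_distrib, ← prod_mul_distrib, ← prod_mul_distrib]
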